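/- Let T be an infinite rooted tree with root o and finite vertex degrees, let h ∈ (0,1) and q := (2/3)h, and assume every q-island of T is finite. Let t ∈ ℕ and let z ∈ ℕ with z ≥ 2 be such that every vertex of T at graph distance at most t from o has at most z − 1 children. Suppose there exist a finite union U of q-islands of T with q·|U| ≥ 2^{5/6}·t^{1/3}, and a bridge structure B interconnecting {o} ∪ U (i.e. a vertex set B ⊆ T such that B ∪ {o} ∪ U is connected) with dist(o, v) ≤ t for every v ∈ B, satisfying z·|(B ∪ {o}) ∖ A_q| ≤ (h/3)·|U|. Then there exists a finite connected vertex subset K of T with o ∈ K, |K| ≥ 2^{5/6}·t^{1/3}/q, and |∂K| ≤ h·|K|. -/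

import Mathlib

/-!
Take `K := B ∪ {o} ∪ U` together with every `q`-island meeting it. The islands are finite, so `K`
is finite, and `K` is connected because every added island meets the connected set
`B ∪ {o} ∪ U`. Apart from the bridge vertices `W := (B ∪ {o}) \ A_q`, `K` is a finite union `D`
of islands, a finite part of `A_q` with no neighbours in `A_q \ D`. Supermodularity of `Δ_q`
makes a finite union of cores a core `S ⊇ D`; as no edge joins `D` to `S \ D`,
`Δ_q D = Δ_q S - Δ_q (S \ D) ≥ 0`, i.e. `|∂D| ≤ q|D|`. An edge leaving `K` leaves `D` or is
incident to `W`, whose vertices have a parent and at most `z - 1` children, so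
`|∂K| ≤ q|K| + z|W| ≤ (2h/3 + h/3)|K|`.
-/

open SimpleGraph

variable {V : Type*}

/-- The edge boundary `∂S` of a vertex set `S`: the set of edges of `G` with one endpoint
in `S` and the other endpoint outside `S`. -/
def edgeBdry (G : SimpleGraph V) (S : Set V) : Set (Sym2 V) :=
  {e | e ∈ G.edgeSet ∧ ∃ x ∈ S, ∃ y ∉ S, e = s(x, y)}

/-- The `q`-isolation `Δ_q S := q·|S| − |∂S|` of a vertex set `S`. -/
noncomputable def isolation (G : SimpleGraph V) (q : ℝ) (S : Set V) : ℝ :=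
  q * (S.ncard : ℝ) - ((edgeBdry G S).ncard : ℝ)

/-- A finite vertex set `S` is a `q`-isolated core if `Δ_q S > Δ_q A` for every
proper subset `A ⊊ S`. -/
def IsIsolatedCore (G : SimpleGraph V) (q : ℝ) (S : Set V) : Prop :=
  S.Finite ∧ ∀ A : Set V, A ⊂ S → isolation G q A < isolation G q S

/-- `A_q`: the union of all `q`-isolated cores of `G`. -/
def coreUnion (G : SimpleGraph V) (q : ℝ) : Set V :=
  ⋃₀ {S : Set V | IsIsolatedCore G q S}

/-- A `q`-island: a connected component of (the subgraph of `G` induced by) `A_q`,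
characterised as a nonempty connected subset of `A_q` which is closed under
adjacency within `A_q`. -/
def IsIsland (G : SimpleGraph V) (q : ℝ) (C : Set V) : Prop :=
  C ⊆ coreUnion G q ∧ (G.induce C).Connected ∧
    ∀ x ∈ C, ∀ y ∈ coreUnion G q, G.Adj x y → y ∈ C

/-- The anchored expansion constant
`i(G) = lim_{n→∞} inf { |∂K|/|K| : o ∈ K ⊆ G connected, n ≤ |K| < ∞ }`;
since the infima are nondecreasing in `n`, the limit equals the supremum over `n`. -/
noncomputable def anchoredExpansion (G : SimpleGraph V) (o : V) : ℝ :=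
  ⨆ n : ℕ, sInf {r : ℝ | ∃ K : Set V, o ∈ K ∧ K.Finite ∧ (G.induce K).Connected ∧
    n ≤ K.ncard ∧ r = ((edgeBdry G K).ncard : ℝ) / (K.ncard : ℝ)}

/-- The set of children of a vertex `x` in the tree rooted at `o`: the neighbours of `x`
at larger graph distance from the root. -/
def children (G : SimpleGraph V) (o x : V) : Set V :=
  {y | G.Adj x y ∧ G.dist o y = G.dist o x + 1}

open Set

section EdgeBoundary

variable {G : SimpleGraph V}

lemma mem_edgeBdry_of_adj {S : Set V} {x y : V} (hadj : G.Adj x y) (hx : x ∈ S) (hy : y ∉ S) :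
    s(x, y) ∈ edgeBdry G S :=
  ⟨hadj, x, hx, y, hy, rfl⟩

lemma edgeBdry_subset_biUnion (S : Set V) :
    edgeBdry G S ⊆ ⋃ x ∈ S, (fun y => s(x, y)) '' G.neighborSet x := by
  rintro _ ⟨hadj, x, hx, y, -, rfl⟩
  exact mem_biUnion hx ⟨y, hadj, rfl⟩

lemma edgeBdry_finite (hloc : ∀ v, (G.neighborSet v).Finite) {S : Set V} (hS : S.Finite) :
    (edgeBdry G S).Finite :=
  (hS.biUnion fun x _ => (hloc x).image _).subset (edgeBdry_subset_biUnion S)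

lemma edgeBdry_union_subset (S T : Set V) :
    edgeBdry G (S ∪ T) ⊆ edgeBdry G S ∪ edgeBdry G T := by
  rintro _ ⟨hadj, x, hx | hx, y, hy, rfl⟩
  · exact Or.inl (mem_edgeBdry_of_adj hadj hx fun h => hy (Or.inl h))
  · exact Or.inr (mem_edgeBdry_of_adj hadj hx fun h => hy (Or.inr h))

lemma edgeBdry_inter_subset (S T : Set V) :
    edgeBdry G (S ∩ T) ⊆ edgeBdry G S ∪ edgeBdry G T := by
  rintro _ ⟨hadj, x, hx, y, hy, rfl⟩
  by_cases hyS : y ∈ S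
  · exact Or.inr (mem_edgeBdry_of_adj hadj hx.2 fun hyT => hy ⟨hyS, hyT⟩)
  · exact Or.inl (mem_edgeBdry_of_adj hadj hx.1 hyS)

lemma edgeBdry_union_inter_edgeBdry_inter_subset (S T : Set V) :
    edgeBdry G (S ∪ T) ∩ edgeBdry G (S ∩ T) ⊆ edgeBdry G S ∩ edgeBdry G T := by
  rintro _ ⟨⟨-, x', hx', y', hy', hxy⟩, ⟨hadj, x, hx, y, -, rfl⟩⟩
  have hy : y ∉ S ∪ T := by
    rcases Sym2.eq_iff.mp hxy with ⟨-, rfl⟩ | ⟨rfl, -⟩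
    · exact hy'
    · exact absurd (Or.inl hx.1) hy'
  exact ⟨mem_edgeBdry_of_adj hadj hx.1 fun h => hy (Or.inl h),
    mem_edgeBdry_of_adj hadj hx.2 fun h => hy (Or.inr h)⟩

lemma ncard_edgeBdry_union_add_inter_le (hloc : ∀ v, (G.neighborSet v).Finite)
    {S T : Set V} (hS : S.Finite) (hT : T.Finite) :
    (edgeBdry G (S ∪ T)).ncard + (edgeBdry G (S ∩ T)).ncard
      ≤ (edgeBdry G S).ncard + (edgeBdry G T).ncard := by
  have hfin := (edgeBdry_finite hloc hS).union (edgeBdry_finite hloc hT)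
  rw [← ncard_union_add_ncard_inter _ _ (edgeBdry_finite hloc (hS.union hT))
      (edgeBdry_finite hloc (hS.inter_of_left T)),
    ← ncard_union_add_ncard_inter _ _ (edgeBdry_finite hloc hS) (edgeBdry_finite hloc hT)]
  exact add_le_add
    (ncard_le_ncard (union_subset (edgeBdry_union_subset S T) (edgeBdry_inter_subset S T)) hfin)
    (ncard_le_ncard (edgeBdry_union_inter_edgeBdry_inter_subset S T)
      (hfin.subset (inter_subset_left.trans subset_union_left)))

lemma edgeBdry_union_of_forall_not_adj {S T : Set V} (hST : ∀ x ∈ S, ∀ y ∈ T, ¬ G.Adj x y) :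
    edgeBdry G (S ∪ T) = edgeBdry G S ∪ edgeBdry G T := by
  refine (edgeBdry_union_subset S T).antisymm (union_subset ?_ ?_)
  · rintro _ ⟨hadj, x, hx, y, hy, rfl⟩
    exact mem_edgeBdry_of_adj hadj (Or.inl hx) fun h => h.elim hy (hST x hx y · hadj)
  · rintro _ ⟨hadj, x, hx, y, hy, rfl⟩
    exact mem_edgeBdry_of_adj hadj (Or.inr hx) fun h => h.elim (hST y · x hx hadj.symm) hy

lemma disjoint_edgeBdry_of_forall_not_adj {S T : Set V} (hST : Disjoint S T)
    (hno : ∀ x ∈ S, ∀ y ∈ T, ¬ G.Adj x y) : Disjoint (edgeBdry G S) (edgeBdry G T) := by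
  rw [Set.disjoint_left]
  rintro _ ⟨hadj, x, hx, y, -, rfl⟩ ⟨-, x', hx', y', -, hxy⟩
  rcases Sym2.eq_iff.mp hxy with ⟨rfl, -⟩ | ⟨-, rfl⟩
  · exact hST.ne_of_mem hx hx' rfl
  · exact hno x hx y hx' hadj

lemma ncard_edgeBdry_union_le (hloc : ∀ v, (G.neighborSet v).Finite) {W D : Set V}
    (hW : W.Finite) (hD : D.Finite) {z : ℕ} (hdeg : ∀ w ∈ W, (G.neighborSet w).ncard ≤ z) :
    (edgeBdry G (W ∪ D)).ncard ≤ (edgeBdry G D).ncard + z * W.ncard := by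
  have hinc : (⋃ w ∈ W, (fun y => s(w, y)) '' G.neighborSet w).ncard ≤ z * W.ncard := by
    rw [← hW.coe_toFinset, ncard_coe_finset]
    refine (hW.toFinset.set_ncard_biUnion_le _).trans ?_
    rw [mul_comm]
    exact Finset.sum_le_card_nsmul _ _ _ fun w hw =>
      (ncard_image_le (hloc w)).trans (hdeg w (hW.mem_toFinset.mp hw))
  have hsub : edgeBdry G (W ∪ D) ⊆
      edgeBdry G D ∪ ⋃ w ∈ W, (fun y => s(w, y)) '' G.neighborSet w :=
    (edgeBdry_union_subset W D).trans
      (union_subset (edgeBdry_subset_biUnion W |>.trans subset_union_right) subset_union_left)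
  calc (edgeBdry G (W ∪ D)).ncard
      ≤ (edgeBdry G D ∪ ⋃ w ∈ W, (fun y => s(w, y)) '' G.neighborSet w).ncard :=
        ncard_le_ncard hsub
          ((edgeBdry_finite hloc hD).union (hW.biUnion fun w _ => (hloc w).image _))
    _ ≤ _ := (ncard_union_le _ _).trans (Nat.add_le_add_left hinc _)

end EdgeBoundary

section Isolation

variable {G : SimpleGraph V} {q : ℝ}

lemma isolation_add_isolation_le (hloc : ∀ v, (G.neighborSet v).Finite) (q : ℝ)
    {S T : Set V} (hS : S.Finite) (hT : T.Finite) :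
    isolation G q S + isolation G q T ≤ isolation G q (S ∪ T) + isolation G q (S ∩ T) := by
  have hv : ((S ∪ T).ncard : ℝ) + (S ∩ T).ncard = S.ncard + T.ncard := by
    exact_mod_cast ncard_union_add_ncard_inter S T hS hT
  have he : ((edgeBdry G (S ∪ T)).ncard : ℝ) + (edgeBdry G (S ∩ T)).ncard
      ≤ (edgeBdry G S).ncard + (edgeBdry G T).ncard := by
    exact_mod_cast ncard_edgeBdry_union_add_inter_le hloc hS hT
  simp only [isolation]
  linear_combination (-q) * hv + he

lemma isolation_union_of_forall_not_adj (hloc : ∀ v, (G.neighborSet v).Finite) (q : ℝ)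
    {S T : Set V} (hS : S.Finite) (hT : T.Finite) (hST : Disjoint S T)
    (hno : ∀ x ∈ S, ∀ y ∈ T, ¬ G.Adj x y) :
    isolation G q (S ∪ T) = isolation G q S + isolation G q T := by
  simp only [isolation, ncard_union_eq hST hS hT, edgeBdry_union_of_forall_not_adj hno,
    ncard_union_eq (disjoint_edgeBdry_of_forall_not_adj hST hno) (edgeBdry_finite hloc hS)
      (edgeBdry_finite hloc hT)]
  push_cast
  ring

lemma IsIsolatedCore.isolation_le_of_subset {S A : Set V} (hS : IsIsolatedCore G q S)
    (hA : A ⊆ S) : isolation G q A ≤ isolation G q S := by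
  rcases hA.eq_or_ssubset with rfl | hA
  exacts [le_rfl, (hS.2 A hA).le]

lemma IsIsolatedCore.isolation_le_union (hloc : ∀ v, (G.neighborSet v).Finite)
    {S X : Set V} (hS : IsIsolatedCore G q S) (hX : X.Finite) :
    isolation G q X ≤ isolation G q (X ∪ S) := by
  have := isolation_add_isolation_le hloc q hX hS.1
  have := hS.isolation_le_of_subset (inter_subset_right (s := X))
  linarith

lemma IsIsolatedCore.isolation_lt_union (hloc : ∀ v, (G.neighborSet v).Finite)
    {S X : Set V} (hS : IsIsolatedCore G q S) (hX : X.Finite) (hSX : ¬ S ⊆ X) :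
    isolation G q X < isolation G q (X ∪ S) := by
  have := isolation_add_isolation_le hloc q hX hS.1
  have := hS.2 (X ∩ S) ⟨inter_subset_right, fun h => hSX (h.trans inter_subset_left)⟩
  linarith

lemma IsIsolatedCore.union (hloc : ∀ v, (G.neighborSet v).Finite) {S T : Set V}
    (hS : IsIsolatedCore G q S) (hT : IsIsolatedCore G q T) : IsIsolatedCore G q (S ∪ T) := by
  refine ⟨hS.1.union hT.1, fun A hA => ?_⟩
  have hAfin : A.Finite := (hS.1.union hT.1).subset hA.subset
  by_cases hSA : S ⊆ A
  · have hTA : ¬ T ⊆ A := fun hTA => hA.not_subset (union_subset hSA hTA)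
    have hAT : A ∪ T = S ∪ T :=
      (union_subset hA.subset subset_union_right).antisymm (union_subset_union_left T hSA)
    simpa only [hAT] using hT.isolation_lt_union hloc hAfin hTA
  · have hAST : A ∪ S ∪ T = S ∪ T := by
      rw [union_assoc, union_eq_right.mpr hA.subset]
    calc isolation G q A < isolation G q (A ∪ S) := hS.isolation_lt_union hloc hAfin hSA
      _ ≤ isolation G q (A ∪ S ∪ T) := hT.isolation_le_union hloc (hAfin.union hS.1)
      _ = isolation G q (S ∪ T) := by rw [hAST]

lemma isIsolatedCore_empty (G : SimpleGraph V) (q : ℝ) : IsIsolatedCore G q ∅ :=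
  ⟨finite_empty, fun _ hA => absurd (empty_subset _) hA.not_subset⟩

lemma isIsolatedCore_biUnion (hloc : ∀ v, (G.neighborSet v).Finite) {ι : Type*} {s : Set ι}
    (hs : s.Finite) {f : ι → Set V} (hf : ∀ i ∈ s, IsIsolatedCore G q (f i)) :
    IsIsolatedCore G q (⋃ i ∈ s, f i) := by
  induction s, hs using Set.Finite.induction_on with
  | empty => simpa using isIsolatedCore_empty G q
  | @insert i s _ _ ih =>
    rw [biUnion_insert]
    exact (hf i (mem_insert i s)).union hloc (ih fun j hj => hf j (mem_insert_of_mem i hj))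

lemma isolation_nonneg_of_subset_coreUnion (hloc : ∀ v, (G.neighborSet v).Finite) {D : Set V}
    (hDfin : D.Finite) (hDA : D ⊆ coreUnion G q)
    (hclosed : ∀ x ∈ D, ∀ y ∈ coreUnion G q, G.Adj x y → y ∈ D) :
    0 ≤ isolation G q D := by
  choose! core hcore hmem using fun x (hx : x ∈ D) => mem_sUnion.mp (hDA hx)
  set S := ⋃ x ∈ D, core x
  have hS : IsIsolatedCore G q S := isIsolatedCore_biUnion hloc hDfin hcore
  have hDS : D ⊆ S := fun x hx => mem_biUnion hx (hmem x hx)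
  have hSA : S ⊆ coreUnion G q :=
    iUnion₂_subset fun x hx => subset_sUnion_of_mem (hcore x hx)
  have hsplit := isolation_union_of_forall_not_adj hloc q hDfin hS.1.sdiff disjoint_sdiff_right
    fun x hx y hy hadj => hy.2 (hclosed x hx y (hSA hy.1) hadj)
  rw [union_sdiff_cancel hDS] at hsplit
  linarith [hS.isolation_le_of_subset (sdiff_subset (t := D))]

end Isolation

namespace SimpleGraph

variable {G : SimpleGraph V}

lemma exists_induce_connected_closed_of_mem {S : Set V} {v : V} (hv : v ∈ S) :
    ∃ C ⊆ S, v ∈ C ∧ (G.induce C).Connected ∧ ∀ x ∈ C, ∀ y ∈ S, G.Adj x y → y ∈ C := by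
  set c := (G.induce S).connectedComponentMk ⟨v, hv⟩
  let f : c.toSimpleGraph →g G.induce (Subtype.val '' c.supp) :=
    ⟨fun x => ⟨x.1.1, x.1, x.2, rfl⟩, fun hadj => hadj⟩
  refine ⟨Subtype.val '' c.supp, image_subset_iff.mpr fun x _ => x.2, ⟨⟨v, hv⟩, rfl, rfl⟩,
    c.connected_toSimpleGraph.map f ?_, ?_⟩
  · rintro ⟨_, x, hx, rfl⟩
    exact ⟨⟨x, hx⟩, rfl⟩
  · rintro _ ⟨x, hx, rfl⟩ y hy hadj
    exact ⟨⟨y, hy⟩, c.mem_supp_of_adj_mem_supp hx (show (G.induce S).Adj x ⟨y, hy⟩ from hadj),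
      rfl⟩

lemma connected_induce_union_iUnion {ι : Type*} {S : Set V} {C : ι → Set V}
    (hS : (G.induce S).Connected) (hC : ∀ i, (G.induce (C i)).Connected)
    (hmeet : ∀ i, (S ∩ C i).Nonempty) : (G.induce (S ∪ ⋃ i, C i)).Connected := by
  obtain ⟨⟨u, hu⟩⟩ := hS.nonempty
  refine induce_connected_of_patches u (Or.inl hu) fun {v} hv => ?_
  rcases hv with hv | hv
  · exact ⟨S, subset_union_left, hu, hv, hS.preconnected _ _⟩
  · obtain ⟨i, hi⟩ := mem_iUnion.mp hv
    exact ⟨S ∪ C i, union_subset_union_right S (subset_iUnion C i), Or.inl hu, Or.inr hi,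
      (induce_union_connected hS.preconnected (hC i).preconnected (hmeet i)).preconnected _ _⟩

lemma IsTree.eq_penultimate_of_dist_eq_add_one (hG : G.IsTree) {o w y : V} {p : G.Walk o w}
    (hp : p.IsPath) (hadj : G.Adj y w) (hdist : G.dist o w = G.dist o y + 1) :
    y = p.penultimate := by
  obtain ⟨r, -, hr⟩ := (hG.connected o y).exists_path_of_dist
  have hrp : (r.concat hadj).IsPath :=
    (r.concat hadj).isPath_of_length_eq_dist (by simp [hr, hdist])
  have hpr : p = r.concat hadj :=
    congrArg Subtype.val ((hG.isAcyclic.subsingleton_path o w).elim ⟨p, hp⟩ ⟨_, hrp⟩)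
  rw [hpr, Walk.penultimate_concat]

lemma IsTree.ncard_neighborSet_le (hG : G.IsTree) (o w : V) (hw : (G.neighborSet w).Finite) :
    (G.neighborSet w).ncard ≤ (children G o w).ncard + 1 := by
  obtain ⟨p, hp, -⟩ := (hG.connected o w).exists_path_of_dist
  have hsub : G.neighborSet w ⊆ insert p.penultimate (children G o w) := by
    intro y hy
    rcases hG.dist_eq_dist_add_one_of_adj o hy with hd | hd
    · exact Or.inl (hG.eq_penultimate_of_dist_eq_add_one hp (G.adj_symm hy) hd)
    · exact Or.inr ⟨hy, hd⟩
  exact (ncard_le_ncard hsub ((hw.subset fun _ hy => hy.1).insert _)).trans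
    (ncard_insert_le _ _)

lemma Connected.finite_setOf_dist_le (hG : G.Connected) (hloc : ∀ v, (G.neighborSet v).Finite)
    (o : V) (n : ℕ) : {v | G.dist o v ≤ n}.Finite := by
  induction n with
  | zero =>
    refine (finite_singleton o).subset fun v hv => ?_
    exact ((hG.preconnected o v).dist_eq_zero_iff.mp (Nat.le_zero.mp hv)).symm
  | succ n ih =>
    refine (ih.biUnion fun u _ => (hloc u).insert u).subset fun v hv => ?_
    obtain ⟨p, hp⟩ := (hG.preconnected o v).exists_walk_length_eq_dist
    by_cases hnil : p.Nil
    · exact mem_biUnion (show G.dist o o ≤ n by simp) (Or.inl (hnil.eq).symm)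
    · have hlen : p.dropLast.length = p.length - 1 := by simp
      have hv : G.dist o v ≤ n + 1 := hv
      refine mem_biUnion (x := p.penultimate) ?_ (Or.inr (p.adj_penultimate hnil))
      exact (dist_le p.dropLast).trans (by omega)

end SimpleGraph

lemma exists_isIsland_mem {G : SimpleGraph V} {q : ℝ} {v : V} (hv : v ∈ coreUnion G q) :
    ∃ C, IsIsland G q C ∧ v ∈ C := by
  obtain ⟨C, hCA, hvC, hconn, hclosed⟩ :=
    SimpleGraph.exists_induce_connected_closed_of_mem (G := G) hv
  exact ⟨C, ⟨hCA, hconn, hclosed⟩, hvC⟩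

/-- The witness `D` is the union of the islands meeting `S`. -/
lemma exists_finite_closed_of_isIsland_finite {G : SimpleGraph V} {q : ℝ}
    (hislands : ∀ C, IsIsland G q C → C.Finite) {S : Set V} (hS : S.Finite)
    (hSconn : (G.induce S).Connected) :
    ∃ D : Set V, D.Finite ∧ D ⊆ coreUnion G q ∧ S ∩ coreUnion G q ⊆ D ∧
      (∀ x ∈ D, ∀ y ∈ coreUnion G q, G.Adj x y → y ∈ D) ∧ (G.induce (S ∪ D)).Connected := by
  choose island hisland hmem using
    fun v : ↥(S ∩ coreUnion G q) => exists_isIsland_mem v.2.2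
  have : Finite ↥(S ∩ coreUnion G q) := (hS.inter_of_left _).to_subtype
  refine ⟨⋃ v, island v, finite_iUnion fun v => hislands _ (hisland v),
    iUnion_subset fun v => (hisland v).1, fun v hv => mem_iUnion.mpr ⟨⟨v, hv⟩, hmem _⟩, ?_,
    SimpleGraph.connected_induce_union_iUnion hSconn (fun v => (hisland v).2.1)
      fun v => ⟨v, v.2.1, hmem v⟩⟩
  intro x hx y hy hadj
  obtain ⟨v, hxv⟩ := mem_iUnion.mp hx
  exact mem_iUnion.mpr ⟨v, (hisland v).2.2 x hxv y hy hadj⟩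

theorem stmt13_general (T : SimpleGraph V) (htree : T.IsTree)
    (hloc : ∀ v : V, (T.neighborSet v).Finite) (o : V)
    (h q : ℝ) (hh0 : 0 < h) (hqdef : q = 2 / 3 * h)
    (hislands : ∀ C : Set V, IsIsland T q C → C.Finite)
    (t z : ℕ) (hz : 2 ≤ z)
    (hchild : ∀ x : V, T.dist o x ≤ t → (children T o x).ncard ≤ z - 1)
    (U B : Set V)
    (hU : ∃ I : Set (Set V), I.Finite ∧ (∀ C ∈ I, IsIsland T q C) ∧ U = ⋃₀ I)
    (hUfin : U.Finite)
    (hUcard : (2 : ℝ) ^ ((5 : ℝ) / 6) * (t : ℝ) ^ ((1 : ℝ) / 3) ≤ q * (U.ncard : ℝ))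
    (hBconn : (T.induce (B ∪ {o} ∪ U)).Connected)
    (hBdist : ∀ v ∈ B, T.dist o v ≤ t)
    (hsmall : (z : ℝ) * (((B ∪ {o}) \ coreUnion T q).ncard : ℝ) ≤ h / 3 * (U.ncard : ℝ)) :
    ∃ K : Set V, K.Finite ∧ o ∈ K ∧ (T.induce K).Connected ∧
      (2 : ℝ) ^ ((5 : ℝ) / 6) * (t : ℝ) ^ ((1 : ℝ) / 3) / q ≤ (K.ncard : ℝ) ∧
      ((edgeBdry T K).ncard : ℝ) ≤ h * (K.ncard : ℝ) := by
  subst hqdef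
  have hUA : U ⊆ coreUnion T (2 / 3 * h) := by
    obtain ⟨I, -, hI, rfl⟩ := hU
    exact sUnion_subset fun C hC => (hI C hC).1
  have hBt : ∀ v ∈ B ∪ {o}, T.dist o v ≤ t := by
    rintro v (hv | rfl)
    exacts [hBdist v hv, by simp]
  have hBfin : (B ∪ {o}).Finite := (htree.connected.finite_setOf_dist_le hloc o t).subset hBt
  obtain ⟨D, hDfin, hDA, hSD, hDclosed, hKconn⟩ :=
    exists_finite_closed_of_isIsland_finite hislands (hBfin.union hUfin) hBconn
  set K := B ∪ {o} ∪ U ∪ D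
  set W := (B ∪ {o}) \ coreUnion T (2 / 3 * h)
  have hKWD : K = W ∪ D := by
    refine subset_antisymm (union_subset (fun x hx => ?_) subset_union_right)
      (union_subset_union_left D (sdiff_subset.trans subset_union_left))
    by_cases hxA : x ∈ coreUnion T (2 / 3 * h)
    · exact Or.inr (hSD ⟨hx, hxA⟩)
    · exact Or.inl ⟨hx.resolve_right fun hxU => hxA (hUA hxU), hxA⟩
  have hKfin : K.Finite := (hBfin.union hUfin).union hDfin
  have hUK : (U.ncard : ℝ) ≤ K.ncard := by
    exact_mod_cast ncard_le_ncard (subset_union_right.trans subset_union_left) hKfin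
  have hDK : (D.ncard : ℝ) ≤ K.ncard := by exact_mod_cast ncard_le_ncard subset_union_right hKfin
  have hdeg : ∀ w ∈ W, (T.neighborSet w).ncard ≤ z := fun w hw =>
    (htree.ncard_neighborSet_le o w (hloc w)).trans (by have := hchild w (hBt w hw.1); omega)
  have hbdry : ((edgeBdry T K).ncard : ℝ) ≤ (edgeBdry T D).ncard + z * W.ncard := by
    rw [hKWD]
    exact_mod_cast ncard_edgeBdry_union_le hloc hBfin.sdiff hDfin hdeg
  have hD := isolation_nonneg_of_subset_coreUnion hloc hDfin hDA hDclosed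
  rw [isolation] at hD
  refine ⟨K, hKfin, by simp [K], hKconn, ?_, ?_⟩
  · rw [div_le_iff₀ (by positivity)]
    calc _ ≤ 2 / 3 * h * U.ncard := hUcard
      _ ≤ K.ncard * (2 / 3 * h) := by rw [mul_comm]; gcongr
  · calc ((edgeBdry T K).ncard : ℝ) ≤ (edgeBdry T D).ncard + z * W.ncard := hbdry
      _ ≤ 2 / 3 * h * D.ncard + h / 3 * U.ncard := by linarith
      _ ≤ 2 / 3 * h * K.ncard + h / 3 * K.ncard := by gcongr
      _ = h * K.ncard := by ring

/-- Let `T` be an infinite rooted tree with root `o` and finite vertex degrees, let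
`h ∈ (0,1)` and `q := (2/3)h`, and assume every `q`-island of `T` is finite. Let `t ∈ ℕ`
and let `z ∈ ℕ` with `z ≥ 2` be such that every vertex of `T` at graph distance at most
`t` from `o` has at most `z − 1` children. Suppose there exist a finite union `U` of
`q`-islands of `T` with `q·|U| ≥ 2^{5/6}·t^{1/3}`, and a bridge structure `B`
interconnecting `{o} ∪ U` (i.e. a vertex set `B ⊆ T` such that `B ∪ {o} ∪ U` is
connected) with `dist(o, v) ≤ t` for every `v ∈ B`, satisfying
`z·|(B ∪ {o}) ∖ A_q| ≤ (h/3)·|U|`. Then there exists a finite connected vertex subset `K`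
of `T` with `o ∈ K`, `|K| ≥ 2^{5/6}·t^{1/3}/q`, and `|∂K| ≤ h·|K|`. -/
theorem stmt13 (T : SimpleGraph V) [Infinite V] (htree : T.IsTree)
    (hloc : ∀ v : V, (T.neighborSet v).Finite) (o : V)
    (h q : ℝ) (hh0 : 0 < h) (hh1 : h < 1) (hqdef : q = 2 / 3 * h)
    (hislands : ∀ C : Set V, IsIsland T q C → C.Finite)
    (t z : ℕ) (hz : 2 ≤ z)
    (hchild : ∀ x : V, T.dist o x ≤ t → (children T o x).ncard ≤ z - 1)
    (U B : Set V)
    (hU : ∃ I : Set (Set V), I.Finite ∧ (∀ C ∈ I, IsIsland T q C) ∧ U = ⋃₀ I)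
    (hUfin : U.Finite)
    (hUcard : (2 : ℝ) ^ ((5 : ℝ) / 6) * (t : ℝ) ^ ((1 : ℝ) / 3) ≤ q * (U.ncard : ℝ))
    (hBconn : (T.induce (B ∪ {o} ∪ U)).Connected)
    (hBdist : ∀ v ∈ B, T.dist o v ≤ t)
    (hsmall : (z : ℝ) * (((B ∪ {o}) \ coreUnion T q).ncard : ℝ) ≤ h / 3 * (U.ncard : ℝ)) :
    ∃ K : Set V, K.Finite ∧ o ∈ K ∧ (T.induce K).Connected ∧
      (2 : ℝ) ^ ((5 : ℝ) / 6) * (t : ℝ) ^ ((1 : ℝ) / 3) / q ≤ (K.ncard : ℝ) ∧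
      ((edgeBdry T K).ncard : ℝ) ≤ h * (K.ncard : ℝ) :=
  stmt13_general T htree hloc o h q hh0 hqdef hislands t z hz hchild U B hU hUfin hUcard hBconn
    hBdist hsmall
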